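/- arXiv:2105.11802 — 3 statements merged into one kernel-verified Lean document; each statement's English description precedes it below -/
import Mathlib

section
/- Gap bound lemma: if the confidence bounds hold, i.e. |Δ̂f(x¹,x²) - Δf(x¹,x²)| ≤ β^{1/2} ψ(x¹,x²)^{1/2} for all pairs (x¹,x²), where Δf(x¹,x²) = f(x¹) - f(x²) and Δ̂f is the estimated difference, then for all x ∈ X the true suboptimality gap Δ(x) = max_z f(z) - f(x) satisfies Δ(x) ≤ 2 Δ̂(x), where Δ̂(x) = δ + f̂(x̂*) - f̂(x), x̂* = argmax_x f̂(x), and δ = max_z [f̂(z) - f̂(x̂*) + β^{1/2} ψ(x̂*, z)^{1/2}]. -/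
open Finset

/-- Gap bound lemma: if the confidence bounds hold, then the true suboptimality gap
satisfies `Δ x ≤ 2 Δ̂ x` for all `x`. -/
theorem gap_bound
    {X : Type*} [Fintype X] [Nonempty X]
    (f fhat : X → ℝ) (β : ℝ) (hβ : 0 ≤ β)
    (ψ : X → X → ℝ) (hψ : ∀ a b, 0 ≤ ψ a b) (hψsym : ∀ a b, ψ a b = ψ b a)
    (hconf : ∀ a b : X,
      |(fhat a - fhat b) - (f a - f b)| ≤ Real.sqrt β * Real.sqrt (ψ a b))
    (xstar : X) (hstar : ∀ z, fhat z ≤ fhat xstar)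
    (δ : ℝ)
    (hδ : δ = Finset.univ.sup' Finset.univ_nonempty
      (fun z => fhat z - fhat xstar + Real.sqrt β * Real.sqrt (ψ xstar z)))
    (Δhat Δ : X → ℝ)
    (hΔhat : ∀ x, Δhat x = δ + fhat xstar - fhat x)
    (hΔ : ∀ x, Δ x = Finset.univ.sup' Finset.univ_nonempty f - f x) :
    ∀ x, Δ x ≤ 2 * Δhat x := by
  intro x
  -- δ bounds f̂(z) - f̂(x̂*) + √β√ψ for every z
  have hδ_ge : ∀ z : X, fhat z - fhat xstar + Real.sqrt β * Real.sqrt (ψ xstar z) ≤ δ := by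
    intro z
    rw [hδ]
    exact Finset.le_sup' (fun z => fhat z - fhat xstar + Real.sqrt β * Real.sqrt (ψ xstar z)) (Finset.mem_univ z)
  have hδ_nonneg : 0 ≤ δ := by
    have := hδ_ge xstar
    have h1 : 0 ≤ Real.sqrt β * Real.sqrt (ψ xstar xstar) :=
      mul_nonneg (Real.sqrt_nonneg _) (Real.sqrt_nonneg _)
    linarith
  -- let z* maximize f
  obtain ⟨zstar, -, hz⟩ := Finset.exists_mem_eq_sup' (Finset.univ_nonempty (α := X)) f
  have hzmax : Finset.univ.sup' Finset.univ_nonempty f = f zstar := hz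
  -- f(z*) - f(x̂*) ≤ δ
  have h1 : f zstar - f xstar ≤ δ := by
    have hc := abs_le.mp (hconf zstar xstar)
    have := hδ_ge zstar
    rw [hψsym xstar zstar] at this
    linarith [hc.1]
  -- f(x̂*) - f(x) ≤ Δ̂(x)
  have h2 : f xstar - f x ≤ δ + 2 * (fhat xstar - fhat x) := by
    have hc := abs_le.mp (hconf xstar x)
    have := hδ_ge x
    linarith [hc.1]
  rw [hΔ, hzmax, hΔhat]
  linarith
end

section
/- Information-ratio bound: under the confidence-bound assumption, the information ratio of the IDS sampling distribution is at most 12β. Precisely, let Δ̂, δ, x̂*, ψ be as in the gap-estimate construction, let I(x) = log(1 + ψ(x̂*, x)) with 0 ≤ ψ(x̂*,x) ≤ 4 for all x, and suppose there exists z̃ ∈ X with Δ̂(z̃) = β^{1/2} ψ(x̂*, z̃)^{1/2} and ψ(x̂*, z̃) > 0. Then min_{x ∈ X, p ∈ (0,1]} ((1-p)δ + p Δ̂(x))² / (p I(x)) ≤ 12 β. -/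
/-- On `[0,4]`, `a ≤ 3 log (1+a)`. -/
lemma aux_log_lb (a : ℝ) (h0 : 0 ≤ a) (h4 : a ≤ 4) : a / 3 ≤ Real.log (1 + a) := by
  have hchord : a / 4 * Real.log 5 ≤ Real.log (1 + a) := by
    have hc := strictConcaveOn_log_Ioi.concaveOn
    have h := hc.2 (Set.mem_Ioi.mpr one_pos) (Set.mem_Ioi.mpr (by norm_num : (0:ℝ) < 5))
      (by linarith : (0:ℝ) ≤ 1 - a / 4) (by linarith : (0:ℝ) ≤ a / 4) (by ring)
    simp only [smul_eq_mul, Real.log_one, mul_zero, zero_add, mul_one] at h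
    rw [show 1 - a / 4 + a / 4 * 5 = 1 + a by ring] at h
    linarith
  have h5 : (4 : ℝ) / 3 ≤ Real.log 5 := by
    rw [Real.le_log_iff_exp_le (by norm_num)]
    by_contra hcon
    push_neg at hcon
    have h3 : Real.exp ((4:ℝ)/3) ^ 3 = Real.exp 1 ^ 4 := by
      rw [← Real.exp_nat_mul, ← Real.exp_nat_mul]; norm_num
    have h125 : (125:ℝ) < Real.exp ((4:ℝ)/3) ^ 3 := by
      calc (125:ℝ) = 5 ^ 3 := by norm_num
        _ < Real.exp ((4:ℝ)/3) ^ 3 := by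
          exact pow_lt_pow_left₀ hcon (by norm_num) (by norm_num)
    have he : Real.exp 1 ^ 4 < 2.7182818286 ^ 4 :=
      pow_lt_pow_left₀ Real.exp_one_lt_d9 (Real.exp_pos 1).le (by norm_num)
    nlinarith
  nlinarith [mul_le_mul_of_nonneg_left h5 (by linarith : (0:ℝ) ≤ a / 4)]

/-- Information-ratio bound: under the confidence-bound assumption, the information ratio of
the IDS sampling distribution is at most `12β`.  Here `ψ x` stands for `ψ(x̂*, x)` and
`I x = log (1 + ψ x)`. -/
theorem information_ratio_le
    {X : Type*} [Fintype X] [Nonempty X]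
    (β : ℝ) (hβ : 0 < β)
    (ψ : X → ℝ) (hψ0 : ∀ x, 0 ≤ ψ x) (hψ4 : ∀ x, ψ x ≤ 4)
    (δ : ℝ) (hδ : 0 ≤ δ)
    (Δhat : X → ℝ) (hδΔ : ∀ x, δ ≤ Δhat x)
    (ztilde : X)
    (hz : Δhat ztilde = Real.sqrt β * Real.sqrt (ψ ztilde))
    (hzpos : 0 < ψ ztilde) :
    ∃ (x : X) (p : ℝ), 0 < p ∧ p ≤ 1 ∧
      ((1 - p) * δ + p * Δhat x) ^ 2 / (p * Real.log (1 + ψ x)) ≤ 12 * β := by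
  refine ⟨ztilde, 1, one_pos, le_refl 1, ?_⟩
  have hlog : ψ ztilde / 3 ≤ Real.log (1 + ψ ztilde) :=
    aux_log_lb _ (hψ0 _) (hψ4 _)
  have hlogpos : 0 < Real.log (1 + ψ ztilde) := lt_of_lt_of_le (by linarith) hlog
  have hsq : Δhat ztilde ^ 2 = β * ψ ztilde := by
    rw [hz, mul_pow, Real.sq_sqrt hβ.le, Real.sq_sqrt (hψ0 _)]
  rw [div_le_iff₀ (by simpa using hlogpos)]
  have : β * ψ ztilde ≤ 3 * β * Real.log (1 + ψ ztilde) := by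
    nlinarith
  nlinarith [mul_pos hβ hzpos]
end

section
/- Gap-dependent information-ratio bound, case 1: if 0 ≤ 2δ ≤ Δ̂ and I > 0 with Δ̂² ≤ 3βI (i.e., Δ̂²/I ≤ 3β via ψ ≤ 3I), then min_{p ∈ (0,1]} 4((1-p)δ + pΔ̂)²/(pI) ≤ 16 δ Δ̂ / I ≤ 48 δ β / Δ̂. -/
/-- Gap-dependent information-ratio bound, case 1: if `2δ ≤ Δ̂` and `Δ̂² ≤ 3βI`, then
`min_{p ∈ (0,1]} 4((1-p)δ + pΔ̂)²/(pI) ≤ 16 δ Δ̂ / I ≤ 48 δ β / Δ̂`. -/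
theorem gap_dependent_info_ratio_case1
    (δ Δhat β I : ℝ) (hδ : 0 < δ) (hΔ : 0 < Δhat) (hβ : 0 < β) (hI : 0 < I)
    (hcase : 2 * δ ≤ Δhat) (hΔI : Δhat ^ 2 ≤ 3 * β * I) :
    (∃ p : ℝ, 0 < p ∧ p ≤ 1 ∧
      4 * ((1 - p) * δ + p * Δhat) ^ 2 / (p * I) ≤ 16 * δ * Δhat / I) ∧
    16 * δ * Δhat / I ≤ 48 * δ * β / Δhat := by
  constructor
  · refine ⟨δ / Δhat, div_pos hδ hΔ, ?_, ?_⟩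
    · rw [div_le_one hΔ]; linarith
    · rw [div_le_div_iff₀ (by positivity) hI]
      have h1 : (1 - δ / Δhat) * δ + δ / Δhat * Δhat ≤ 2 * δ := by
        rw [div_mul_cancel₀ _ hΔ.ne']
        have : 0 ≤ δ / Δhat * δ := by positivity
        nlinarith
      have h0 : 0 ≤ (1 - δ / Δhat) * δ + δ / Δhat * Δhat := by
        rw [div_mul_cancel₀ _ hΔ.ne']
        nlinarith [div_le_one_of_le₀ (by linarith : δ ≤ Δhat) hΔ.le]
      have hsq : ((1 - δ / Δhat) * δ + δ / Δhat * Δhat) ^ 2 ≤ 4 * δ ^ 2 := by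
        nlinarith
      have : 16 * δ * Δhat * (δ / Δhat * I) = 16 * δ ^ 2 * I := by
        field_simp
      rw [this]; nlinarith
  · rw [div_le_div_iff₀ hI hΔ]; nlinarith
end
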